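/- Let L_k be the graph consisting of k disjoint copies of P₄ together with a path through the center vertices of these copies (one chosen center per copy). Then γ_{r2}(L_k) = 3k = 3|V(L_k)|/4. -/
import Mathlib


open Finset

/-- A `k`-rainbow dominating function: every vertex assigned `∅` sees all `k` colors
among its neighbors. -/
def SimpleGraph.IsRainbowDF {V : Type*} {k : ℕ} (G : SimpleGraph V)
    (f : V → Finset (Fin k)) : Prop :=
  ∀ v, f v = ∅ → ∀ c : Fin k, ∃ u, G.Adj v u ∧ c ∈ f u

/-- The `k`-rainbow domination number. -/
noncomputable def SimpleGraph.rainbowNum {V : Type*} [Fintype V] (G : SimpleGraph V)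
    (k : ℕ) : ℕ :=
  sInf {w | ∃ f : V → Finset (Fin k), G.IsRainbowDF f ∧ w = ∑ v, (f v).card}

/-- `S` is a dominating set of `G`. -/
def SimpleGraph.IsDomSet {V : Type*} (G : SimpleGraph V) (S : Set V) : Prop :=
  ∀ v, v ∉ S → ∃ u ∈ S, G.Adj v u

/-- The domination number. -/
noncomputable def SimpleGraph.domNum {V : Type*} [Fintype V] (G : SimpleGraph V) : ℕ :=
  sInf {n | ∃ S : Finset V, G.IsDomSet ↑S ∧ n = S.card}

/-- The graph `L_k`: `k` disjoint copies of `P₄` together with a path through one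
chosen center (internal vertex) of each copy. -/
def Lgraph (k : ℕ) : SimpleGraph (Fin k × Fin 4) :=
  SimpleGraph.fromRel fun x y =>
    (x.1 = y.1 ∧ (SimpleGraph.pathGraph 4).Adj x.2 y.2) ∨
    (x.2 = 1 ∧ y.2 = 1 ∧ (x.1 : ℕ) + 1 = (y.1 : ℕ))

lemma Lgraph_nbr_aux {k : ℕ} {x u : Fin k × Fin 4} (h : (Lgraph k).Adj x u) (hx : x.2 ≠ 1) :
    u.1 = x.1 ∧ ((x.2 : ℕ) + 1 = (u.2 : ℕ) ∨ (u.2 : ℕ) + 1 = (x.2 : ℕ)) := by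
  rw [Lgraph, SimpleGraph.fromRel_adj] at h
  obtain ⟨-, h | h⟩ := h
  · rcases h with ⟨h1, h2⟩ | ⟨h1, -⟩
    · exact ⟨h1.symm, SimpleGraph.pathGraph_adj.mp h2⟩
    · exact absurd h1 hx
  · rcases h with ⟨h1, h2⟩ | ⟨-, h1, -⟩
    · exact ⟨h1, (SimpleGraph.pathGraph_adj.mp h2).symm⟩
    · exact absurd h1 hx

lemma Lgraph_nbr0 {k : ℕ} {i : Fin k} {u : Fin k × Fin 4}
    (h : (Lgraph k).Adj (i, 0) u) : u = (i, 1) := by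
  obtain ⟨h1, h2⟩ := Lgraph_nbr_aux h (show ((0 : Fin 4) ≠ 1) by decide)
  have h2' : (0 : ℕ) + 1 = (u.2 : ℕ) ∨ (u.2 : ℕ) + 1 = 0 := h2
  have hlt := u.2.isLt
  refine Prod.ext h1 (Fin.ext ?_)
  show (u.2 : ℕ) = 1
  omega

lemma Lgraph_nbr3 {k : ℕ} {i : Fin k} {u : Fin k × Fin 4}
    (h : (Lgraph k).Adj (i, 3) u) : u = (i, 2) := by
  obtain ⟨h1, h2⟩ := Lgraph_nbr_aux h (show ((3 : Fin 4) ≠ 1) by decide)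
  have h2' : (3 : ℕ) + 1 = (u.2 : ℕ) ∨ (u.2 : ℕ) + 1 = 3 := h2
  have hlt := u.2.isLt
  refine Prod.ext h1 (Fin.ext ?_)
  show (u.2 : ℕ) = 2
  omega

lemma Lgraph_nbr2 {k : ℕ} {i : Fin k} {u : Fin k × Fin 4}
    (h : (Lgraph k).Adj (i, 2) u) : u = (i, 1) ∨ u = (i, 3) := by
  obtain ⟨h1, h2⟩ := Lgraph_nbr_aux h (show ((2 : Fin 4) ≠ 1) by decide)
  have h2' : (2 : ℕ) + 1 = (u.2 : ℕ) ∨ (u.2 : ℕ) + 1 = 2 := h2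
  have hlt := u.2.isLt
  rcases h2' with h2' | h2'
  · right
    refine Prod.ext h1 (Fin.ext ?_)
    show (u.2 : ℕ) = 3
    omega
  · left
    refine Prod.ext h1 (Fin.ext ?_)
    show (u.2 : ℕ) = 1
    omega

lemma two_le_of_mem {s : Finset (Fin 2)} (h0 : (0 : Fin 2) ∈ s) (h1 : (1 : Fin 2) ∈ s) :
    2 ≤ s.card :=
  Finset.one_lt_card.2 ⟨0, h0, 1, h1, by decide⟩

lemma copy_bound {k : ℕ} {f : Fin k × Fin 4 → Finset (Fin 2)}
    (hf : (Lgraph k).IsRainbowDF f) (i : Fin k) :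
    3 ≤ ∑ j : Fin 4, (f (i, j)).card := by
  have pos : ∀ j : Fin 4, f (i, j) ≠ ∅ → 1 ≤ (f (i, j)).card := fun j hj =>
    Finset.card_pos.2 (Finset.nonempty_iff_ne_empty.2 hj)
  have full1 : f (i, 0) = ∅ → 2 ≤ (f (i, 1)).card := by
    intro h
    obtain ⟨u, hu, hc0⟩ := hf (i, 0) h 0
    obtain ⟨v, hv, hc1⟩ := hf (i, 0) h 1
    rw [Lgraph_nbr0 hu] at hc0
    rw [Lgraph_nbr0 hv] at hc1
    exact two_le_of_mem hc0 hc1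
  have full3 : f (i, 3) = ∅ → 2 ≤ (f (i, 2)).card := by
    intro h
    obtain ⟨u, hu, hc0⟩ := hf (i, 3) h 0
    obtain ⟨v, hv, hc1⟩ := hf (i, 3) h 1
    rw [Lgraph_nbr3 hu] at hc0
    rw [Lgraph_nbr3 hv] at hc1
    exact two_le_of_mem hc0 hc1
  have mid : f (i, 2) = ∅ → f (i, 1) = ∅ → 2 ≤ (f (i, 3)).card := by
    intro h2 h1
    have get : ∀ c : Fin 2, c ∈ f (i, 3) := by
      intro c
      obtain ⟨u, hu, hc⟩ := hf (i, 2) h2 c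
      rcases Lgraph_nbr2 hu with h | h
      · rw [h, h1] at hc; exact absurd hc (by simp)
      · rwa [h] at hc
    exact two_le_of_mem (get 0) (get 1)
  rw [Fin.sum_univ_four]
  by_cases h0 : f (i, 0) = ∅
  · have hh := full1 h0
    by_cases h3 : f (i, 3) = ∅
    · have := full3 h3; omega
    · have := pos 3 h3; omega
  · have hc0 := pos 0 h0
    by_cases h3 : f (i, 3) = ∅
    · have := full3 h3; omega
    · have hc3 := pos 3 h3
      by_cases h2 : f (i, 2) = ∅
      · by_cases h1 : f (i, 1) = ∅
        · have := mid h2 h1; omega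
        · have := pos 1 h1; omega
      · have := pos 2 h2; omega

lemma Lgraph_weight_mem (k : ℕ) :
    (3 * k) ∈ {w | ∃ f : Fin k × Fin 4 → Finset (Fin 2),
      (Lgraph k).IsRainbowDF f ∧ w = ∑ v, (f v).card} := by
  classical
  set g : Fin k × Fin 4 → Finset (Fin 2) :=
    fun p => if p.2 = 1 then Finset.univ else if p.2 = 3 then {0} else ∅ with hg
  refine ⟨g, ?_, ?_⟩
  · rintro ⟨a, b⟩ hv c
    refine ⟨(a, 1), ?_, by simp [hg]⟩
    rw [Lgraph, SimpleGraph.fromRel_adj]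
    fin_cases b
    · exact ⟨by simp [Prod.ext_iff, Fin.ext_iff],
        Or.inl (Or.inl ⟨rfl, by rw [SimpleGraph.pathGraph_adj]; exact Or.inl rfl⟩)⟩
    · exfalso; simp [hg] at hv; exact Finset.univ_nonempty.ne_empty hv
    · exact ⟨by simp [Prod.ext_iff, Fin.ext_iff],
        Or.inl (Or.inl ⟨rfl, by rw [SimpleGraph.pathGraph_adj]; exact Or.inr rfl⟩)⟩
    · exfalso; simp [hg] at hv
  · have hcard : ∀ a : Fin k, ∑ j : Fin 4, (g (a, j)).card = 3 := by
      intro a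
      rw [Fin.sum_univ_four]
      simp only [hg]
      norm_num
      rw [if_neg (show ¬(0 : Fin 4) = 3 by decide), if_neg (show ¬(2 : Fin 4) = 1 by decide),
        if_neg (show ¬(2 : Fin 4) = 3 by decide), if_neg (show ¬(3 : Fin 4) = 1 by decide)]
      simp
    rw [Fintype.sum_prod_type]
    simp only [hcard, Finset.sum_const, Finset.card_univ, Fintype.card_fin, smul_eq_mul]
    omega

/-- `γ_{r2}(L_k) ≥ 3k`; in fact `γ_{r2}(L_k) = 3k = 3|V(L_k)|/4`. -/
theorem rainbow2_Lgraph (k : ℕ) :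
    3 * k ≤ (Lgraph k).rainbowNum 2 ∧ (Lgraph k).rainbowNum 2 = 3 * k := by
  have hmem := Lgraph_weight_mem k
  have hlb : ∀ w ∈ {w | ∃ f : Fin k × Fin 4 → Finset (Fin 2),
      (Lgraph k).IsRainbowDF f ∧ w = ∑ v, (f v).card}, 3 * k ≤ w := by
    rintro w ⟨f, hf, rfl⟩
    calc 3 * k = ∑ _i : Fin k, 3 := by
          simp [Finset.sum_const, Finset.card_univ, mul_comm]
      _ ≤ ∑ i : Fin k, ∑ j : Fin 4, (f (i, j)).card :=
          Finset.sum_le_sum fun i _ => copy_bound hf i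
      _ = ∑ v, (f v).card := by rw [Fintype.sum_prod_type]
  have heq : (Lgraph k).rainbowNum 2 = 3 * k := by
    rw [SimpleGraph.rainbowNum]
    exact le_antisymm (Nat.sInf_le hmem) (le_csInf ⟨_, hmem⟩ hlb)
  exact ⟨heq.ge, heq⟩
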